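/- Let N ≥ 2, let Ω be a convex bounded domain in ℝ^d, and let (u_1,…,u_{N−1}) be a jointly N-monotone (N−1)-tuple of bounded vector fields on Ω. Define f(x_1,…,x_N) = ∑_{ℓ=1}^{N−1} ⟨u_ℓ(x_1), x_1 − x_{ℓ+1}⟩ and let f̃ be the convexification of f in the first variable: f̃(x_1,…,x_N) = inf{ ∑_{k=1}^{n} λ_k f(x_1^k, x_2,…,x_N) : n ∈ ℕ, λ_k ≥ 0, ∑_k λ_k = 1, x_1^k ∈ Ω, ∑_k λ_k x_1^k = x_1 }. Then: (1) f ≥ f̃ on Ω^N; (2) f̃ is convex in the first variable and concave in the last N−1 variables; (3) f̃(x,x,…,x) = 0 for every x ∈ Ω; and (4) ∑_{i=0}^{N−1} f̃(σ^i(x_1,…,x_N)) ≥ 0 for all (x_1,…,x_N) ∈ Ω^N. -/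

import Mathlib

open MeasureTheory Finset
open scoped BigOperators RealInnerProductSpace
open Fin.NatCast

noncomputable section

/-- `ℝ^d` as a Euclidean space. -/
abbrev Ed (d : ℕ) := EuclideanSpace ℝ (Fin d)

/-- The cyclic permutation `σ(x₁,…,x_N) = (x₂,…,x_N,x₁)` acting on tuples. -/
def cyc {N : ℕ} {α : Type*} (x : Fin N → α) : Fin N → α := x ∘ finRotate N

/-- The `(N-1)`-tuple `(u 1, …, u (N-1))` is jointly `N`-monotone on `Ω`:
for every cycle `x 1, …, x (2N-1)` of points of `Ω` with `x (N+i) = x i` for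
`1 ≤ i ≤ N-1`, one has `∑_{i=1}^{N} ∑_{ℓ=1}^{N-1} ⟨u ℓ (x i), x i - x (i+ℓ)⟩ ≥ 0`. -/
def JointlyNMonotone (N : ℕ) {d : ℕ} (Ω : Set (Ed d)) (u : ℕ → Ed d → Ed d) : Prop :=
  ∀ x : ℕ → Ed d,
    (∀ i, 1 ≤ i → i ≤ 2 * N - 1 → x i ∈ Ω) →
    (∀ i, 1 ≤ i → i ≤ N - 1 → x (N + i) = x i) →
    0 ≤ ∑ i ∈ Icc 1 N, ∑ ℓ ∈ Icc 1 (N - 1), ⟪u ℓ (x i), x i - x (i + ℓ)⟫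

/-- `H` is `N`-sub-antisymmetric on `Ω^N` : `∑_{i=0}^{N-1} H(σ^i x) ≤ 0` on `Ω^N`. -/
def NSubAntisymmetric (N : ℕ) {d : ℕ} (Ω : Set (Ed d)) (H : (Fin N → Ed d) → ℝ) : Prop :=
  ∀ x : Fin N → Ed d, (∀ i, x i ∈ Ω) → ∑ i ∈ range N, H (cyc^[i] x) ≤ 0

/-- `H` is `N`-antisymmetric on `Ω^N` : `∑_{i=0}^{N-1} H(σ^i x) = 0` on `Ω^N`. -/
def NAntisymmetric (N : ℕ) {d : ℕ} (Ω : Set (Ed d)) (H : (Fin N → Ed d) → ℝ) : Prop :=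
  ∀ x : Fin N → Ed d, (∀ i, x i ∈ Ω) → ∑ i ∈ range N, H (cyc^[i] x) = 0

/-- `u` is `N`-cyclically monotone on `Ω`: for every cycle `x 1, …, x N, x (N+1) = x 1`
of points of `Ω`, `∑_{i=1}^{N} ⟨u (x i), x i - x (i+1)⟩ ≥ 0`. -/
def NCyclicallyMonotone (N : ℕ) {d : ℕ} (Ω : Set (Ed d)) (u : Ed d → Ed d) : Prop :=
  ∀ x : ℕ → Ed d,
    (∀ i, 1 ≤ i → i ≤ N → x i ∈ Ω) → x (N + 1) = x 1 →
    0 ≤ ∑ i ∈ Icc 1 N, ⟪u (x i), x i - x (i + 1)⟫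

/-- `f(x₁,…,x_N) = ∑_{ℓ=1}^{N-1} ⟨u ℓ (x₁), x₁ - x_{ℓ+1}⟩`. -/
def fJoint (N : ℕ) {d : ℕ} [NeZero N] (u : ℕ → Ed d → Ed d) (x : Fin N → Ed d) : ℝ :=
  ∑ ℓ ∈ Icc 1 (N - 1), ⟪u ℓ (x 0), x 0 - x (ℓ : Fin N)⟫

/-- The convexification of `f` in its first variable:
`f̃(x₁,…,x_N) = inf { ∑ λₖ f(x₁ᵏ, x₂,…,x_N) : λₖ ≥ 0, ∑ λₖ = 1, x₁ᵏ ∈ Ω, ∑ λₖ x₁ᵏ = x₁ }`. -/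
def convexify₁ (N : ℕ) {d : ℕ} [NeZero N] (Ω : Set (Ed d)) (f : (Fin N → Ed d) → ℝ)
    (x : Fin N → Ed d) : ℝ :=
  sInf {r : ℝ | ∃ n : ℕ, ∃ lam : Fin n → ℝ, ∃ z : Fin n → Ed d,
    (∀ k, 0 ≤ lam k) ∧ (∑ k, lam k = 1) ∧ (∀ k, z k ∈ Ω) ∧
    (∑ k, lam k • z k = x 0) ∧
    r = ∑ k, lam k * f (Function.update x 0 (z k))}

/-!
`f` is itself an admissible convex combination (a single point), which gives `f̃ ≤ f`, and
concatenating two convex decompositions gives the convexity of `f̃` in `x₁`. For fixed weights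
and points `f` is affine in `x₂, …, x_N`, so `f̃` is an infimum of concave functions of them.

For the cyclic inequality take almost optimal decompositions `x_j = ∑_k λ_{jk} z_{jk}` for every
`j` and average the joint `N`-monotonicity inequality over all cycles `(z_{1k₁}, …, z_{Nk_N})`
with the product weights `∏_j λ_{jk_j}`. Every term of that inequality involves two distinct
points and is affine in the second one, so the average is the sum over `j` of the convex
combinations approximating `f̃(σ^j x)`. On the diagonal `f̃ ≤ f = 0`, while the cyclic inequality
gives `N f̃(x, …, x) ≥ 0`.
-/

open Function

section Marginal

variable {ι R : Type*} [Fintype ι] [DecidableEq ι] [CommSemiring R] {β : ι → Type*}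
  [∀ i, Fintype (β i)]

theorem sum_prod_filter_apply_eq [∀ i, DecidableEq (β i)] (w : ∀ i, β i → R)
    (hw : ∀ i, ∑ b, w i b = 1) {j j' : ι} (hj : j ≠ j') (a : β j) (b : β j') :
    ∑ κ : ∀ i, β i with κ j = a ∧ κ j' = b, ∏ i, w i (κ i) = w j a * w j' b := by
  set T : ∀ i, Finset (β i) := update (update (fun _ => univ) j {a}) j' {b}
  have hT : ({κ : ∀ i, β i | κ j = a ∧ κ j' = b} : Finset _) = Fintype.piFinset T := by
    ext κ
    simp only [mem_filter, mem_univ, true_and, Fintype.mem_piFinset]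
    constructor
    · rintro ⟨rfl, rfl⟩ i
      rcases eq_or_ne i j' with rfl | h'
      · simp [T]
      rcases eq_or_ne i j with rfl | h
      · simp [T, h']
      · simp [T, h, h']
    · intro h
      have hja := h j
      have hjb := h j'
      simp_all [T]
  rw [hT, ← prod_univ_sum, Fintype.prod_eq_mul j j' hj]
  · simp [T, hj]
  · rintro i ⟨h, h'⟩
    simp [T, h, h', hw]

theorem sum_prod_mul_apply_apply (w : ∀ i, β i → R) (hw : ∀ i, ∑ b, w i b = 1) {j j' : ι}
    (hj : j ≠ j') (φ : β j → β j' → R) :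
    ∑ κ : ∀ i, β i, (∏ i, w i (κ i)) * φ (κ j) (κ j') = ∑ a, ∑ b, w j a * w j' b * φ a b := by
  classical
  rw [← Finset.sum_fiberwise univ (fun κ : ∀ i, β i => (κ j, κ j')), Fintype.sum_prod_type]
  refine sum_congr rfl fun a _ => sum_congr rfl fun b _ => ?_
  rw [← sum_prod_filter_apply_eq w hw hj a b, sum_mul]
  refine sum_congr (by simp [Prod.ext_iff]) fun κ hκ => ?_
  simp only [mem_filter] at hκ
  rw [hκ.2.1, hκ.2.2]

end Marginal

theorem cyc_iterate_apply {N : ℕ} [NeZero N] {α : Type*} (x : Fin N → α) (i : ℕ) (j : Fin N) :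
    (cyc^[i] x) j = x (j + i) := by
  induction i generalizing j with
  | zero => simp
  | succ i ih =>
    rw [iterate_succ_apply', cyc, comp_apply, ih, finRotate_apply, Nat.cast_succ, add_right_comm,
      add_assoc]

theorem Fin.natCast_ne_zero_of_mem_Icc {N ℓ : ℕ} [NeZero N] (hℓ : ℓ ∈ Icc 1 (N - 1)) :
    (ℓ : Fin N) ≠ 0 := by
  rw [mem_Icc] at hℓ
  rw [Ne, Fin.natCast_eq_zero]
  exact fun h => absurd (Nat.le_of_dvd (by omega) h) (by omega)

theorem Fin.sum_Icc_one_natCast {N : ℕ} [NeZero N] {M : Type*} [AddCommMonoid M]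
    (g : Fin N → M) : ∑ i ∈ Icc 1 N, g i = ∑ j, g j := by
  rw [← Ico_add_one_right_eq_Icc, sum_Ico_eq_sum_range, Nat.add_sub_cancel,
    ← Fin.sum_univ_eq_sum_range]
  simp only [Nat.cast_add, Nat.cast_one, Fin.cast_val_eq_self]
  exact Equiv.sum_comp (Equiv.addLeft 1) g

structure IsBarycenter {E ι : Type*} [AddCommGroup E] [Module ℝ E] [Fintype ι] (Ω : Set E)
    (lam : ι → ℝ) (z : ι → E) (p : E) : Prop where
  nonneg : ∀ k, 0 ≤ lam k
  sum_eq_one : ∑ k, lam k = 1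
  mem : ∀ k, z k ∈ Ω
  sum_smul_eq : ∑ k, lam k • z k = p

namespace IsBarycenter

variable {E : Type*} [AddCommGroup E] [Module ℝ E] {Ω : Set E}

theorem single {p : E} (hp : p ∈ Ω) : IsBarycenter Ω (fun _ : Fin 1 => 1) (fun _ => p) p :=
  ⟨fun _ => zero_le_one, by simp, fun _ => hp, by simp⟩

theorem append {n₁ n₂ : ℕ} {lam₁ : Fin n₁ → ℝ} {lam₂ : Fin n₂ → ℝ} {z₁ : Fin n₁ → E}
    {z₂ : Fin n₂ → E} {p q : E} (h₁ : IsBarycenter Ω lam₁ z₁ p) (h₂ : IsBarycenter Ω lam₂ z₂ q)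
    {a b : ℝ} (ha : 0 ≤ a) (hb : 0 ≤ b) (hab : a + b = 1) :
    IsBarycenter Ω (Fin.append (a • lam₁) (b • lam₂)) (Fin.append z₁ z₂) (a • p + b • q) where
  nonneg := Fin.addCases (fun k => by simpa using mul_nonneg ha (h₁.nonneg k))
    fun k => by simpa using mul_nonneg hb (h₂.nonneg k)
  sum_eq_one := by
    simp [Fin.sum_univ_add, ← mul_sum, h₁.sum_eq_one, h₂.sum_eq_one, hab]
  mem := Fin.addCases (fun k => by simpa using h₁.mem k) fun k => by simpa using h₂.mem k
  sum_smul_eq := by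
    simp [Fin.sum_univ_add, mul_smul, ← smul_sum, h₁.sum_smul_eq, h₂.sum_smul_eq]

theorem sum_mul_inner_sub {F ι : Type*} [NormedAddCommGroup F] [InnerProductSpace ℝ F]
    [Fintype ι] {Ω : Set F} {lam : ι → ℝ} {z : ι → F} {p : F} (h : IsBarycenter Ω lam z p)
    (v w : F) : ∑ k, lam k * ⟪v, w - z k⟫ = ⟪v, w - p⟫ := by
  simp_rw [← real_inner_smul_right, ← inner_sum, smul_sub, sum_sub_distrib, ← sum_smul,
    h.sum_eq_one, one_smul, h.sum_smul_eq]

end IsBarycenter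

theorem Convex.setOf_forall_apply_mem {ι E : Type*} [AddCommGroup E] [Module ℝ E] {Ω : Set E}
    (hΩ : Convex ℝ Ω) : Convex ℝ {y : ι → E | ∀ i, y i ∈ Ω} :=
  fun _ h₁ _ h₂ _ _ ha hb hab i => hΩ (h₁ i) (h₂ i) ha hb hab

section Convexify

variable {d N : ℕ} [NeZero N] {Ω : Set (Ed d)} {f : (Fin N → Ed d) → ℝ} {m : ℝ}
  {x : Fin N → Ed d}

theorem forall_update_zero_mem {y : Fin N → Ed d} (hy : ∀ i, y i ∈ Ω) {z : Ed d} (hz : z ∈ Ω) :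
    ∀ i, update y 0 z i ∈ Ω :=
  (forall_update_iff y (p := fun _ v => v ∈ Ω)).2 ⟨hz, fun i _ => hy i⟩

theorem convexify₁_le (hf : ∀ y, (∀ i, y i ∈ Ω) → m ≤ f y) (hx : ∀ i, x i ∈ Ω) {n : ℕ}
    {lam : Fin n → ℝ} {z : Fin n → Ed d} (h : IsBarycenter Ω lam z (x 0)) :
    convexify₁ N Ω f x ≤ ∑ k, lam k * f (update x 0 (z k)) := by
  refine csInf_le ⟨m, ?_⟩ ⟨n, lam, z, h.nonneg, h.sum_eq_one, h.mem, h.sum_smul_eq, rfl⟩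
  rintro r ⟨n, lam, z, h0, h1, hz, -, rfl⟩
  calc m = ∑ k, lam k * m := by rw [← sum_mul, h1, one_mul]
    _ ≤ _ := sum_le_sum fun k _ =>
      mul_le_mul_of_nonneg_left (hf _ (forall_update_zero_mem hx (hz k))) (h0 k)

theorem le_convexify₁ (hx : x 0 ∈ Ω) {c : ℝ}
    (h : ∀ (n : ℕ) (lam : Fin n → ℝ) (z : Fin n → Ed d), IsBarycenter Ω lam z (x 0) →
      c ≤ ∑ k, lam k * f (update x 0 (z k))) :
    c ≤ convexify₁ N Ω f x := by
  obtain ⟨h0, h1, hz, hbar⟩ := IsBarycenter.single hx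
  refine le_csInf ⟨_, 1, _, _, h0, h1, hz, hbar, rfl⟩ ?_
  rintro r ⟨n, lam, z, h0, h1, hz, hbar, rfl⟩
  exact h n lam z ⟨h0, h1, hz, hbar⟩

theorem exists_lt_convexify₁_add (hx : x 0 ∈ Ω) {ε : ℝ} (hε : 0 < ε) :
    ∃ (n : ℕ) (lam : Fin n → ℝ) (z : Fin n → Ed d), IsBarycenter Ω lam z (x 0) ∧
      ∑ k, lam k * f (update x 0 (z k)) < convexify₁ N Ω f x + ε := by
  by_contra! h
  linarith [le_convexify₁ hx h]

theorem convexify₁_le_self (hf : ∀ y, (∀ i, y i ∈ Ω) → m ≤ f y) (hx : ∀ i, x i ∈ Ω) :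
    convexify₁ N Ω f x ≤ f x := by
  simpa using convexify₁_le hf hx (IsBarycenter.single (hx 0))

theorem convexOn_convexify₁ (hΩ : Convex ℝ Ω) (hf : ∀ y, (∀ i, y i ∈ Ω) → m ≤ f y)
    (hx : ∀ i, x i ∈ Ω) : ConvexOn ℝ Ω fun z => convexify₁ N Ω f (update x 0 z) := by
  refine ⟨hΩ, fun p hp q hq a b ha hb hab => le_of_forall_pos_le_add fun ε hε => ?_⟩
  obtain ⟨n₁, lam₁, z₁, h₁, hlt₁⟩ := exists_lt_convexify₁_add (f := f) (x := update x 0 p)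
    (by simpa using hp) hε
  obtain ⟨n₂, lam₂, z₂, h₂, hlt₂⟩ := exists_lt_convexify₁_add (f := f) (x := update x 0 q)
    (by simpa using hq) hε
  simp only [update_self] at h₁ h₂
  have hle := convexify₁_le hf (forall_update_zero_mem hx (hΩ hp hq ha hb hab))
    (by simpa using h₁.append h₂ ha hb hab)
  simp only [Fin.sum_univ_add, Fin.append_left, Fin.append_right, update_idem, Pi.smul_apply,
    smul_eq_mul, mul_assoc, ← mul_sum] at hle hlt₁ hlt₂
  calc convexify₁ N Ω f (update x 0 (a • p + b • q))
      ≤ _ := hle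
    _ ≤ a * (convexify₁ N Ω f (update x 0 p) + ε) + b * (convexify₁ N Ω f (update x 0 q) + ε) := by
        gcongr
    _ = _ := by simp only [smul_eq_mul]; linear_combination ε * hab

theorem concaveOn_convexify₁ (hΩ : Convex ℝ Ω) (hf : ∀ y, (∀ i, y i ∈ Ω) → m ≤ f y)
    (hconc : ∀ z ∈ Ω, ConcaveOn ℝ {y | ∀ i, y i ∈ Ω} fun y => f (update y 0 z))
    {x₁ : Ed d} (hx₁ : x₁ ∈ Ω) :
    ConcaveOn ℝ {y | ∀ i, y i ∈ Ω} fun y => convexify₁ N Ω f (update y 0 x₁) := by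
  refine ⟨hΩ.setOf_forall_apply_mem,
    fun y₁ h₁ y₂ h₂ a b ha hb hab => le_convexify₁ (by simpa using hx₁) fun n lam z hz => ?_⟩
  simp only [update_self] at hz
  have hle₁ := convexify₁_le hf (forall_update_zero_mem h₁ hx₁) (by simpa using hz)
  have hle₂ := convexify₁_le hf (forall_update_zero_mem h₂ hx₁) (by simpa using hz)
  simp only [update_idem, smul_eq_mul] at hle₁ hle₂ ⊢
  calc a * convexify₁ N Ω f (update y₁ 0 x₁) + b * convexify₁ N Ω f (update y₂ 0 x₁)
      ≤ ∑ k, lam k * (a * f (update y₁ 0 (z k)) + b * f (update y₂ 0 (z k))) := by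
        simp only [mul_add, sum_add_distrib, mul_left_comm (lam _), ← mul_sum]
        gcongr
    _ ≤ ∑ k, lam k * f (update (a • y₁ + b • y₂) 0 (z k)) := by
        gcongr with k
        · exact hz.nonneg k
        · exact (hconc _ (hz.mem k)).2 h₁ h₂ ha hb hab

end Convexify

section FJoint

variable {d N : ℕ} [NeZero N] {Ω : Set (Ed d)} {u : ℕ → Ed d → Ed d}

theorem fJoint_update (x : Fin N → Ed d) (w : Ed d) :
    fJoint N u (update x 0 w) = ∑ ℓ ∈ Icc 1 (N - 1), ⟪u ℓ w, w - x ℓ⟫ := by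
  refine sum_congr rfl fun ℓ hℓ => ?_
  rw [update_self, update_of_ne (Fin.natCast_ne_zero_of_mem_Icc hℓ)]

theorem fJoint_update_cyc_iterate (x : Fin N → Ed d) (j : ℕ) (w : Ed d) :
    fJoint N u (update (cyc^[j] x) 0 w) = ∑ ℓ ∈ Icc 1 (N - 1), ⟪u ℓ w, w - x (j + ℓ)⟫ := by
  simp only [fJoint_update, cyc_iterate_apply, add_comm]

theorem fJoint_const (p : Ed d) : fJoint N u (fun _ => p) = 0 := by
  simp [fJoint]

theorem exists_forall_le_fJoint (hΩ : Bornology.IsBounded Ω)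
    (hu : ∀ ℓ ∈ Icc 1 (N - 1), ∃ C : ℝ, ∀ x ∈ Ω, ‖u ℓ x‖ ≤ C) :
    ∃ m, ∀ y : Fin N → Ed d, (∀ i, y i ∈ Ω) → m ≤ fJoint N u y := by
  choose! C hC using hu
  refine ⟨∑ ℓ ∈ Icc 1 (N - 1), -(C ℓ * Metric.diam Ω), fun y hy => sum_le_sum fun ℓ hℓ => ?_⟩
  have hCℓ := hC ℓ hℓ _ (hy 0)
  have hdiam : ‖y 0 - y ℓ‖ ≤ Metric.diam Ω := by
    simpa [dist_eq_norm] using Metric.dist_le_diam_of_mem hΩ (hy 0) (hy ℓ)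
  calc -(C ℓ * Metric.diam Ω) ≤ -(‖u ℓ (y 0)‖ * ‖y 0 - y ℓ‖) :=
        neg_le_neg (mul_le_mul hCℓ hdiam (norm_nonneg _) ((norm_nonneg _).trans hCℓ))
    _ ≤ ⟪u ℓ (y 0), y 0 - y ℓ⟫ := neg_le_of_abs_le (abs_real_inner_le_norm _ _)

theorem concaveOn_fJoint_update (hΩ : Convex ℝ Ω) (z : Ed d) :
    ConcaveOn ℝ {y : Fin N → Ed d | ∀ i, y i ∈ Ω} fun y => fJoint N u (update y 0 z) := by
  refine ⟨hΩ.setOf_forall_apply_mem, fun y₁ _ y₂ _ a b _ _ hab => le_of_eq ?_⟩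
  simp only [fJoint_update, smul_eq_mul, mul_sum, ← sum_add_distrib]
  refine sum_congr rfl fun ℓ _ => ?_
  rw [← real_inner_smul_right, ← real_inner_smul_right, ← inner_add_right]
  congr 1
  simp only [Pi.add_apply, Pi.smul_apply]
  linear_combination (norm := module) hab • z

end FJoint

section Monotone

variable {d N : ℕ} [NeZero N] {Ω : Set (Ed d)} {u : ℕ → Ed d → Ed d}

theorem JointlyNMonotone.sum_inner_nonneg (hmono : JointlyNMonotone N Ω u) {y : Fin N → Ed d}
    (hy : ∀ i, y i ∈ Ω) :
    0 ≤ ∑ j, ∑ ℓ ∈ Icc 1 (N - 1), ⟪u ℓ (y j), y j - y (j + ℓ)⟫ := by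
  have := hmono (fun m => y m) (fun _ _ _ => hy _) fun i _ _ => by simp
  simpa [Fin.sum_Icc_one_natCast (fun j => ∑ ℓ ∈ Icc 1 (N - 1), ⟪u ℓ (y j), y j - y (j + ℓ)⟫)]
    using this

theorem JointlyNMonotone.sum_barycenter_nonneg (hmono : JointlyNMonotone N Ω u)
    {n : Fin N → ℕ} {lam : ∀ j, Fin (n j) → ℝ} {z : ∀ j, Fin (n j) → Ed d} {x : Fin N → Ed d}
    (h : ∀ j, IsBarycenter Ω (lam j) (z j) (x j)) :
    0 ≤ ∑ j, ∑ k, lam j k * ∑ ℓ ∈ Icc 1 (N - 1), ⟪u ℓ (z j k), z j k - x (j + ℓ)⟫ := by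
  have hpair : ∀ j, ∀ ℓ ∈ Icc 1 (N - 1),
      ∑ κ : ∀ i, Fin (n i), (∏ i, lam i (κ i)) *
          ⟪u ℓ (z j (κ j)), z j (κ j) - z (j + ℓ) (κ (j + ℓ))⟫ =
        ∑ k, lam j k * ⟪u ℓ (z j k), z j k - x (j + ℓ)⟫ := by
    intro j ℓ hℓ
    rw [sum_prod_mul_apply_apply lam (fun i => (h i).sum_eq_one)
      (left_ne_add.2 (Fin.natCast_ne_zero_of_mem_Icc hℓ))
      fun a b => ⟪u ℓ (z j a), z j a - z (j + ℓ) b⟫]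
    refine sum_congr rfl fun k _ => ?_
    simp_rw [mul_assoc, ← mul_sum, (h (j + ℓ)).sum_mul_inner_sub]
  calc (0 : ℝ)
      ≤ ∑ κ : ∀ i, Fin (n i), (∏ i, lam i (κ i)) * ∑ j, ∑ ℓ ∈ Icc 1 (N - 1),
          ⟪u ℓ (z j (κ j)), z j (κ j) - z (j + ℓ) (κ (j + ℓ))⟫ :=
        sum_nonneg fun κ _ => mul_nonneg (prod_nonneg fun i _ => (h i).nonneg _)
          (hmono.sum_inner_nonneg fun i => (h i).mem _)
    _ = ∑ j, ∑ ℓ ∈ Icc 1 (N - 1), ∑ k, lam j k * ⟪u ℓ (z j k), z j k - x (j + ℓ)⟫ := by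
        simp_rw [mul_sum]
        rw [sum_comm]
        exact sum_congr rfl fun j _ => by rw [sum_comm]; exact sum_congr rfl (hpair j)
    _ = _ := by simp_rw [mul_sum]; exact sum_congr rfl fun j _ => sum_comm

theorem JointlyNMonotone.sum_convexify₁_cyc_iterate_nonneg (hmono : JointlyNMonotone N Ω u)
    {x : Fin N → Ed d} (hx : ∀ i, x i ∈ Ω) :
    0 ≤ ∑ i ∈ range N, convexify₁ N Ω (fJoint N u) (cyc^[i] x) := by
  refine le_of_forall_pos_le_add fun ε hε => ?_
  have hεN : 0 < ε / N := div_pos hε (Nat.cast_pos.2 (NeZero.pos N))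
  choose n lam z h hlt using fun j : Fin N =>
    exists_lt_convexify₁_add (f := fJoint N u) (x := cyc^[j] x)
      (by simpa [cyc_iterate_apply] using hx j) hεN
  simp only [cyc_iterate_apply, zero_add, Fin.cast_val_eq_self, fJoint_update_cyc_iterate] at h hlt
  calc (0 : ℝ)
      ≤ ∑ j : Fin N, ∑ k, lam j k * ∑ ℓ ∈ Icc 1 (N - 1), ⟪u ℓ (z j k), z j k - x (j + ℓ)⟫ :=
        hmono.sum_barycenter_nonneg h
    _ ≤ ∑ j : Fin N, (convexify₁ N Ω (fJoint N u) (cyc^[j] x) + ε / N) :=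
        sum_le_sum fun j _ => (hlt j).le
    _ = ∑ i ∈ range N, convexify₁ N Ω (fJoint N u) (cyc^[i] x) + ε := by
        rw [sum_add_distrib,
          Fin.sum_univ_eq_sum_range fun i => convexify₁ N Ω (fJoint N u) (cyc^[i] x)]
        simp [mul_div_cancel₀ _ (NeZero.ne (N : ℝ))]

end Monotone

theorem statement4_general {d : ℕ} (N : ℕ) [NeZero N]
    (Ω : Set (Ed d)) (hΩconv : Convex ℝ Ω)
    (hΩbdd : Bornology.IsBounded Ω)
    (u : ℕ → Ed d → Ed d)
    (hubdd : ∀ ℓ ∈ Icc 1 (N - 1), ∃ C : ℝ, ∀ x ∈ Ω, ‖u ℓ x‖ ≤ C)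
    (hmono : JointlyNMonotone N Ω u) :
    -- (1) `f ≥ f̃` on `Ω^N`
    (∀ x : Fin N → Ed d, (∀ i, x i ∈ Ω) →
      convexify₁ N Ω (fJoint N u) x ≤ fJoint N u x) ∧
    -- (2a) `f̃` is convex in the first variable
    (∀ x : Fin N → Ed d, (∀ i, x i ∈ Ω) →
      ConvexOn ℝ Ω (fun z => convexify₁ N Ω (fJoint N u) (Function.update x 0 z))) ∧
    -- (2b) `f̃` is concave in the last `N-1` variables
    (∀ x₁ ∈ Ω, ConcaveOn ℝ {y : Fin N → Ed d | ∀ i, y i ∈ Ω}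
      (fun y => convexify₁ N Ω (fJoint N u) (Function.update y 0 x₁))) ∧
    -- (3) `f̃(x,…,x) = 0` for every `x ∈ Ω`
    (∀ x ∈ Ω, convexify₁ N Ω (fJoint N u) (fun _ => x) = 0) ∧
    -- (4) `∑_{i=0}^{N-1} f̃(σ^i x) ≥ 0` on `Ω^N`
    (∀ x : Fin N → Ed d, (∀ i, x i ∈ Ω) →
      0 ≤ ∑ i ∈ range N, convexify₁ N Ω (fJoint N u) (cyc^[i] x)) := by
  obtain ⟨m, hm⟩ := exists_forall_le_fJoint hΩbdd hubdd
  have hcyc := fun (x : Fin N → Ed d) (hx : ∀ i, x i ∈ Ω) =>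
    hmono.sum_convexify₁_cyc_iterate_nonneg hx
  refine ⟨fun x hx => convexify₁_le_self hm hx, fun x hx => convexOn_convexify₁ hΩconv hm hx,
    fun x₁ hx₁ => concaveOn_convexify₁ hΩconv hm (fun z _ => concaveOn_fJoint_update hΩconv z) hx₁,
    fun p hp => le_antisymm ?_ ?_, hcyc⟩
  · simpa [fJoint_const] using convexify₁_le_self hm (x := fun _ => p) fun _ => hp
  · have hdiag := hcyc (fun _ => p) fun _ => hp
    rw [sum_congr rfl fun i _ => by rw [iterate_fixed (f := cyc) rfl i], sum_const, card_range,
      nsmul_eq_mul] at hdiag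
    exact (mul_nonneg_iff_of_pos_left (Nat.cast_pos.2 (NeZero.pos N))).1 hdiag

theorem statement4 {d : ℕ} (N : ℕ) [NeZero N] (hN : 2 ≤ N)
    (Ω : Set (Ed d)) (hΩopen : IsOpen Ω) (hΩconv : Convex ℝ Ω)
    (hΩbdd : Bornology.IsBounded Ω) (hΩne : Ω.Nonempty)
    (u : ℕ → Ed d → Ed d)
    (hubdd : ∀ ℓ ∈ Icc 1 (N - 1), ∃ C : ℝ, ∀ x ∈ Ω, ‖u ℓ x‖ ≤ C)
    (hmono : JointlyNMonotone N Ω u) :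
    -- (1) `f ≥ f̃` on `Ω^N`
    (∀ x : Fin N → Ed d, (∀ i, x i ∈ Ω) →
      convexify₁ N Ω (fJoint N u) x ≤ fJoint N u x) ∧
    -- (2a) `f̃` is convex in the first variable
    (∀ x : Fin N → Ed d, (∀ i, x i ∈ Ω) →
      ConvexOn ℝ Ω (fun z => convexify₁ N Ω (fJoint N u) (Function.update x 0 z))) ∧
    -- (2b) `f̃` is concave in the last `N-1` variables
    (∀ x₁ ∈ Ω, ConcaveOn ℝ {y : Fin N → Ed d | ∀ i, y i ∈ Ω}
      (fun y => convexify₁ N Ω (fJoint N u) (Function.update y 0 x₁))) ∧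
    -- (3) `f̃(x,…,x) = 0` for every `x ∈ Ω`
    (∀ x ∈ Ω, convexify₁ N Ω (fJoint N u) (fun _ => x) = 0) ∧
    -- (4) `∑_{i=0}^{N-1} f̃(σ^i x) ≥ 0` on `Ω^N`
    (∀ x : Fin N → Ed d, (∀ i, x i ∈ Ω) →
      0 ≤ ∑ i ∈ range N, convexify₁ N Ω (fJoint N u) (cyc^[i] x)) :=
  statement4_general N Ω hΩconv hΩbdd u hubdd hmono
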